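/- Fixed-design random coefficient clustered model with bounded design growth: suppose λ_max(X_gᵀX_g) ≤ c·N_g and λ_max(Ω_g) ≤ C·N_g for all g, the error vectors ε_g are mutually independent with mean zero and Cov(ε_g) = Ω_g, and the u_g are mutually independent, independent of all the ε's, with E[u_g] = 0 and Cov(u_g) = Δ. Then E‖(Σ_{g=1}^G X_gᵀε_g + Σ_{g=1}^G X_gᵀX_g u_g)/(Σ_{g=1}^G N_g)‖² ≤ k(cC + c² λ_max(Δ)) · (Σ_{g=1}^G N_g²)/(Σ_{g=1}^G N_g)². In particular, along any sequence of such models in which max_g N_g/Σ_g N_g → 0, the normalized score (Σ_g X_gᵀη_g)/(Σ_g N_g), with η_g = X_g u_g + ε_g, converges to 0 in L² and hence in probability. -/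

import Mathlib

/-!
Stack the two error sources of cluster `g` into one random vector `ξ_g = (ε_g, u_g)`, so that
the unnormalized score is `∑_g A_g ξ_g` with `A_g = [X_gᵀ | X_gᵀX_g]`. Independence and centring
make the `ξ_g` pairwise uncorrelated with block-diagonal second moment `diag(Ω_g, Δ)`, hence
`E‖∑_g A_g ξ_g‖² = ∑_g tr(X_gᵀΩ_gX_g) + tr(M_gΔM_gᵀ)` with `M_g = X_gᵀX_g`. Rayleigh-quotient
bounds give `tr(X_gᵀΩ_gX_g) ≤ λ(Ω_g) tr(M_g) ≤ k·cC·N_g²`, and since `‖M_g v‖ ≤ λ(M_g)‖v‖`,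
`tr(M_gΔM_gᵀ) ≤ λ(Δ) tr(M_gᵀM_g) ≤ k·c²λ(Δ)·N_g²`. Finally `∑N_g²/(∑N_g)² ≤ max N_g/∑N_g`, and
Markov's inequality turns convergence in `L²` into convergence in probability.
-/

open MeasureTheory ProbabilityTheory Matrix Filter

/-- Largest eigenvalue of a real symmetric matrix via the Rayleigh quotient. -/
noncomputable def lamMax {n : ℕ} (S : Matrix (Fin n) (Fin n) ℝ) : ℝ :=
  ⨆ v : {v : Fin n → ℝ // ∑ i, v i ^ 2 = 1}, v.1 ⬝ᵥ S.mulVec v.1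

section Rayleigh

variable {n : ℕ}

lemma bddAbove_rayleigh (S : Matrix (Fin n) (Fin n) ℝ) :
    BddAbove (Set.range fun v : {v : Fin n → ℝ // ∑ i, v i ^ 2 = 1} => v.1 ⬝ᵥ S *ᵥ v.1) := by
  refine ⟨∑ i, ∑ j, |S i j|, ?_⟩
  rintro _ ⟨⟨v, hv⟩, rfl⟩
  have hv_le : ∀ i, |v i| ≤ 1 := fun i => by
    rw [← sq_le_one_iff_abs_le_one, ← hv]
    exact Finset.single_le_sum (fun j _ => sq_nonneg (v j)) (Finset.mem_univ i)
  simp only [dotProduct, mulVec, Finset.mul_sum]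
  gcongr with i _ j _
  calc v i * (S i j * v j) ≤ |v i| * (|S i j| * |v j|) := by
        rw [← abs_mul, ← abs_mul]; exact le_abs_self _
    _ ≤ 1 * (|S i j| * 1) := by gcongr; exacts [hv_le i, hv_le j]
    _ = |S i j| := by ring

lemma dotProduct_mulVec_le_lamMax (S : Matrix (Fin n) (Fin n) ℝ) (v : Fin n → ℝ) :
    v ⬝ᵥ S *ᵥ v ≤ lamMax S * ∑ i, v i ^ 2 := by
  rcases (Finset.sum_nonneg fun i _ => sq_nonneg (v i)).eq_or_lt with h0 | hpos
  · have hsq : (fun i => v i ^ 2) = 0 :=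
      (Fintype.sum_eq_zero_iff_of_nonneg fun i => sq_nonneg (v i)).1 h0.symm
    have hv : v = 0 := funext fun i => by simpa using congrFun hsq i
    simp [hv]
  set t := Real.sqrt (∑ i, v i ^ 2)
  have ht : t ^ 2 = ∑ i, v i ^ 2 := Real.sq_sqrt hpos.le
  have htpos : 0 < t := Real.sqrt_pos.2 hpos
  have hunit : ∑ i, (t⁻¹ • v) i ^ 2 = 1 := by
    simp only [Pi.smul_apply, smul_eq_mul, mul_pow, ← Finset.mul_sum, ← ht]
    field_simp
  have h := le_ciSup (bddAbove_rayleigh S) ⟨t⁻¹ • v, hunit⟩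
  simp only [mulVec_smul, dotProduct_smul, smul_dotProduct, smul_eq_mul] at h
  rw [← ht]
  calc v ⬝ᵥ S *ᵥ v = t ^ 2 * (t⁻¹ * (t⁻¹ * (v ⬝ᵥ S *ᵥ v))) := by field_simp
    _ ≤ t ^ 2 * lamMax S := by gcongr; exact h
    _ = lamMax S * t ^ 2 := mul_comm _ _

lemma lamMax_nonneg {S : Matrix (Fin n) (Fin n) ℝ} (hS : ∀ v, 0 ≤ v ⬝ᵥ S *ᵥ v) :
    0 ≤ lamMax S :=
  Real.iSup_nonneg fun v => hS v.1

end Rayleigh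

section Gram

variable {m : Type*} [Fintype m] {n : ℕ} (X : Matrix m (Fin n) ℝ)

lemma sum_sq_mulVec_eq_dotProduct_gram (v : Fin n → ℝ) :
    ∑ i, (X *ᵥ v) i ^ 2 = v ⬝ᵥ (Xᵀ * X) *ᵥ v := by
  rw [← mulVec_mulVec, dotProduct_mulVec, vecMul_transpose, dotProduct]
  simp only [sq]

lemma lamMax_gram_nonneg : 0 ≤ lamMax (Xᵀ * X) :=
  lamMax_nonneg fun v => sum_sq_mulVec_eq_dotProduct_gram X v ▸ by positivity

lemma sum_sq_mulVec_le_lamMax (v : Fin n → ℝ) :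
    ∑ i, (X *ᵥ v) i ^ 2 ≤ lamMax (Xᵀ * X) * ∑ i, v i ^ 2 :=
  sum_sq_mulVec_eq_dotProduct_gram X v ▸ dotProduct_mulVec_le_lamMax _ v

/-- By Cauchy–Schwarz, `‖w‖⁴ = ⟪Xw, Xv⟫² ≤ ‖Xw‖²‖Xv‖²` for `w = XᵀXv`. -/
lemma sum_sq_gram_mulVec_le (v : Fin n → ℝ) :
    ∑ i, ((Xᵀ * X) *ᵥ v) i ^ 2 ≤ lamMax (Xᵀ * X) ^ 2 * ∑ i, v i ^ 2 := by
  set w := (Xᵀ * X) *ᵥ v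
  set L := lamMax (Xᵀ * X)
  have hw : ∑ i, w i ^ 2 = ∑ p, (X *ᵥ w) p * (X *ᵥ v) p :=
    calc ∑ i, w i ^ 2 = w ⬝ᵥ Xᵀ *ᵥ X *ᵥ v := by simp [dotProduct, sq, w, mulVec_mulVec]
      _ = _ := by rw [dotProduct_mulVec, vecMul_transpose, dotProduct]
  have hcs : (∑ i, w i ^ 2) ^ 2 ≤ (L * ∑ i, w i ^ 2) * (L * ∑ i, v i ^ 2) :=
    calc (∑ i, w i ^ 2) ^ 2 = (∑ p, (X *ᵥ w) p * (X *ᵥ v) p) ^ 2 := by rw [hw]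
    _ ≤ _ := (Finset.sum_mul_sq_le_sq_mul_sq _ _ _).trans
      (mul_le_mul (sum_sq_mulVec_le_lamMax X w) (sum_sq_mulVec_le_lamMax X v)
        (by positivity) (mul_nonneg (lamMax_gram_nonneg X) (by positivity)))
  rcases (Finset.sum_nonneg fun i _ => sq_nonneg (w i)).eq_or_lt with h0 | hpos
  · rw [← h0]; positivity
  · nlinarith

end Gram

section Trace

variable {l l' m n : Type*} [Fintype m] [Fintype n]

lemma mul_mul_transpose_apply (A : Matrix l m ℝ) (S : Matrix m n ℝ) (B : Matrix l' n ℝ)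
    (i : l) (j : l') : (A * S * Bᵀ) i j = A i ⬝ᵥ S *ᵥ B j := by
  simp only [mul_apply, transpose_apply, dotProduct, mulVec, Finset.sum_mul, Finset.mul_sum]
  rw [Finset.sum_comm]
  exact Finset.sum_congr rfl fun _ _ => Finset.sum_congr rfl fun _ _ => by ring

lemma trace_transpose_mul_self_nonneg (A : Matrix m n ℝ) :
    0 ≤ (Aᵀ * A).trace :=
  Finset.sum_nonneg fun _ _ => Finset.sum_nonneg fun _ _ => mul_self_nonneg _

lemma trace_transpose_mul_self_le [DecidableEq n] {B : Matrix m n ℝ} {L : ℝ}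
    (hB : ∀ v, ∑ i, (B *ᵥ v) i ^ 2 ≤ L * ∑ i, v i ^ 2) :
    (Bᵀ * B).trace ≤ Fintype.card n * L := by
  have hcol : ∀ j, (Bᵀ * B) j j ≤ L := fun j => by
    simpa [mulVec_single_one, Pi.single_apply, mul_apply, sq] using hB (Pi.single j 1)
  calc (Bᵀ * B).trace ≤ ∑ _j : n, L := Finset.sum_le_sum fun j _ => hcol j
    _ = Fintype.card n * L := by simp

lemma trace_mul_mul_transpose_le {k : ℕ} (A : Matrix m (Fin k) ℝ)
    (S : Matrix (Fin k) (Fin k) ℝ) :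
    (A * S * Aᵀ).trace ≤ lamMax S * (A * Aᵀ).trace := by
  simp only [trace, diag, Finset.mul_sum]
  refine Finset.sum_le_sum fun i _ => ?_
  rw [mul_mul_transpose_apply]
  simpa [mul_apply, sq] using dotProduct_mulVec_le_lamMax S (A i)

end Trace

lemma fromCols_mul_fromBlocks_zero_mul_transpose {l m n : Type*} [Fintype m] [Fintype n]
    (A : Matrix l m ℝ) (B : Matrix l n ℝ) (S : Matrix m m ℝ) (D : Matrix n n ℝ) :
    fromCols A B * fromBlocks S 0 0 D * (fromCols A B)ᵀ = A * S * Aᵀ + B * D * Bᵀ := by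
  rw [transpose_fromCols, fromCols_mul_fromBlocks, fromCols_mul_fromRows]
  simp

lemma trace_gram_sandwich_le {N k : ℕ} (X : Matrix (Fin N) (Fin k) ℝ)
    (S : Matrix (Fin N) (Fin N) ℝ) (D : Matrix (Fin k) (Fin k) ℝ) {a b : ℝ}
    (hX : lamMax (Xᵀ * X) ≤ a) (hS : lamMax S ≤ b) (hS0 : 0 ≤ lamMax S) (hD : 0 ≤ lamMax D) :
    (Xᵀ * S * X).trace + ((Xᵀ * X) * D * (Xᵀ * X)ᵀ).trace ≤
      k * (a * b + a ^ 2 * lamMax D) := by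
  have hL := lamMax_gram_nonneg X
  have htr : (Xᵀ * X).trace ≤ k * a :=
    (trace_transpose_mul_self_le (sum_sq_mulVec_le_lamMax X)).trans
      (by rw [Fintype.card_fin]; gcongr)
  have hS_part : (Xᵀ * S * X).trace ≤ k * (a * b) :=
    calc (Xᵀ * S * X).trace ≤ lamMax S * (Xᵀ * X).trace := by
          simpa using trace_mul_mul_transpose_le Xᵀ S
      _ ≤ b * (k * a) := mul_le_mul hS htr (trace_transpose_mul_self_nonneg X) (hS0.trans hS)
      _ = k * (a * b) := by ring
  have hD_part : ((Xᵀ * X) * D * (Xᵀ * X)ᵀ).trace ≤ k * (a ^ 2 * lamMax D) :=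
    calc ((Xᵀ * X) * D * (Xᵀ * X)ᵀ).trace ≤ lamMax D * ((Xᵀ * X) * (Xᵀ * X)ᵀ).trace :=
          trace_mul_mul_transpose_le _ D
      _ = lamMax D * ((Xᵀ * X)ᵀ * (Xᵀ * X)).trace := by rw [trace_mul_comm]
      _ ≤ lamMax D * (k * lamMax (Xᵀ * X) ^ 2) := by
          gcongr; simpa using trace_transpose_mul_self_le (sum_sq_gram_mulVec_le X)
      _ ≤ lamMax D * (k * a ^ 2) := by gcongr
      _ = k * (a ^ 2 * lamMax D) := by ring
  linarith

section Moments

variable {Ω : Type*} [MeasurableSpace Ω] {μ : Measure Ω}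

noncomputable def crossMoment {m n : Type*} (μ : Measure Ω) (ξ : Ω → m → ℝ) (ζ : Ω → n → ℝ) :
    Matrix m n ℝ :=
  Matrix.of fun p q => ∫ ω, ξ ω p * ζ ω q ∂μ

variable {l m n : Type*}

lemma crossMoment_eq_zero_of_indepFun {ξ : Ω → m → ℝ} {ζ : Ω → n → ℝ}
    (hind : IndepFun ξ ζ μ) (hξ : Measurable ξ) (hζ : Measurable ζ)
    (hmean : ∀ p, ∫ ω, ξ ω p ∂μ = 0) :
    crossMoment μ ξ ζ = 0 := by
  ext p q
  have hpq : IndepFun (fun ω => ξ ω p) (fun ω => ζ ω q) μ :=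
    hind.comp (measurable_pi_apply p) (measurable_pi_apply q)
  calc ∫ ω, ξ ω p * ζ ω q ∂μ = (∫ ω, ξ ω p ∂μ) * ∫ ω, ζ ω q ∂μ :=
        hpq.integral_mul_eq_mul_integral
          ((measurable_pi_apply p).comp hξ).aestronglyMeasurable
          ((measurable_pi_apply q).comp hζ).aestronglyMeasurable
    _ = 0 := by rw [hmean, zero_mul]

lemma crossMoment_sumElim {m' n' : Type*} (ξ : Ω → m → ℝ) (ζ : Ω → n → ℝ)
    (ξ' : Ω → m' → ℝ) (ζ' : Ω → n' → ℝ) :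
    crossMoment μ (fun ω => Sum.elim (ξ ω) (ζ ω)) (fun ω => Sum.elim (ξ' ω) (ζ' ω)) =
      fromBlocks (crossMoment μ ξ ξ') (crossMoment μ ξ ζ') (crossMoment μ ζ ξ')
        (crossMoment μ ζ ζ') := by
  ext (p | p) (q | q) <;> rfl

lemma memLp_apply_of_integrable_sq {ξ : Ω → m → ℝ} (hξ : Measurable ξ) {p : m}
    (h : Integrable (fun ω => ξ ω p ^ 2) μ) : MemLp (fun ω => ξ ω p) 2 μ :=
  (memLp_two_iff_integrable_sq ((measurable_pi_apply p).comp hξ).aestronglyMeasurable).2 h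

variable [Fintype m] [Fintype n]

lemma integral_dotProduct_mul_dotProduct {ξ : Ω → m → ℝ} {ζ : Ω → n → ℝ}
    (hint : ∀ p q, Integrable (fun ω => ξ ω p * ζ ω q) μ) (a : m → ℝ) (b : n → ℝ) :
    ∫ ω, (a ⬝ᵥ ξ ω) * (b ⬝ᵥ ζ ω) ∂μ = a ⬝ᵥ crossMoment μ ξ ζ *ᵥ b := by
  have hexpand : ∀ ω, (a ⬝ᵥ ξ ω) * (b ⬝ᵥ ζ ω) = ∑ p, ∑ q, a p * b q * (ξ ω p * ζ ω q) :=
    fun ω => by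
      simp only [dotProduct, Finset.sum_mul_sum]
      exact Finset.sum_congr rfl fun _ _ => Finset.sum_congr rfl fun _ _ => by ring
  simp_rw [hexpand]
  rw [integral_finsetSum _ fun p _ => integrable_finsetSum _ fun q _ => (hint p q).const_mul _]
  simp_rw [integral_finsetSum _ fun q _ => (hint _ q).const_mul _, integral_const_mul]
  simp only [dotProduct, mulVec, crossMoment, of_apply, Finset.mul_sum]
  exact Finset.sum_congr rfl fun _ _ => Finset.sum_congr rfl fun _ _ => by ring

lemma memLp_mulVec_apply {ξ : Ω → m → ℝ} (hξ : ∀ p, MemLp (fun ω => ξ ω p) 2 μ)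
    (A : Matrix l m ℝ) (i : l) : MemLp (fun ω => (A *ᵥ ξ ω) i) 2 μ :=
  memLp_finsetSum _ fun p _ => (hξ p).const_mul (A i p)

lemma lamMax_crossMoment_self_nonneg {k : ℕ} {ξ : Ω → Fin k → ℝ}
    (hξ : ∀ p, MemLp (fun ω => ξ ω p) 2 μ) : 0 ≤ lamMax (crossMoment μ ξ ξ) :=
  lamMax_nonneg fun v => by
    rw [← integral_dotProduct_mul_dotProduct fun p q => (hξ p).integrable_mul (hξ q)]
    exact integral_nonneg fun ω => mul_self_nonneg _

lemma integral_sq_sum_of_pairwise {ι : Type*} [Fintype ι] {f : ι → Ω → ℝ}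
    (hf : ∀ g, MemLp (f g) 2 μ) (horth : Pairwise fun g h => ∫ ω, f g ω * f h ω ∂μ = 0) :
    ∫ ω, (∑ g, f g ω) ^ 2 ∂μ = ∑ g, ∫ ω, f g ω ^ 2 ∂μ := by
  have hint : ∀ g h, Integrable (fun ω => f g ω * f h ω) μ :=
    fun g h => (hf g).integrable_mul (hf h)
  simp_rw [sq, Finset.sum_mul_sum]
  rw [integral_finsetSum _ fun g _ => integrable_finsetSum _ fun h _ => hint g h]
  refine Finset.sum_congr rfl fun g _ => ?_
  rw [integral_finsetSum _ fun h _ => hint g h,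
    Finset.sum_eq_single g (fun h _ hne => horth hne.symm) (by simp)]

lemma integral_sum_sq_sum_mulVec {ι : Type*} [Fintype ι] [Fintype l] {m : ι → Type*}
    [∀ g, Fintype (m g)] (A : (g : ι) → Matrix l (m g) ℝ) {ξ : (g : ι) → Ω → m g → ℝ}
    (hξ : ∀ g p, MemLp (fun ω => ξ g ω p) 2 μ)
    (horth : Pairwise fun g h => crossMoment μ (ξ g) (ξ h) = 0) :
    ∫ ω, ∑ i, (∑ g, A g *ᵥ ξ g ω) i ^ 2 ∂μ =
      ∑ g, (A g * crossMoment μ (ξ g) (ξ g) * (A g)ᵀ).trace := by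
  have hint : ∀ g h p q, Integrable (fun ω => ξ g ω p * ξ h ω q) μ :=
    fun g h p q => (hξ g p).integrable_mul (hξ h q)
  have hmoment : ∀ g h i, ∫ ω, (A g *ᵥ ξ g ω) i * (A h *ᵥ ξ h ω) i ∂μ =
      (A g * crossMoment μ (ξ g) (ξ h) * (A h)ᵀ) i i := fun g h i => by
    rw [mul_mul_transpose_apply]
    exact integral_dotProduct_mul_dotProduct (hint g h) _ _
  simp_rw [Finset.sum_apply]
  rw [integral_finsetSum _ fun i _ =>
    (memLp_finsetSum _ fun g _ => memLp_mulVec_apply (hξ g) (A g) i).integrable_sq]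
  calc ∑ i, ∫ ω, (∑ g, (A g *ᵥ ξ g ω) i) ^ 2 ∂μ
      = ∑ i, ∑ g, (A g * crossMoment μ (ξ g) (ξ g) * (A g)ᵀ) i i :=
        Finset.sum_congr rfl fun i _ => by
          rw [integral_sq_sum_of_pairwise (fun g => memLp_mulVec_apply (hξ g) (A g) i)
            fun g h hgh => (hmoment g h i).trans (by simp [horth hgh])]
          simp_rw [sq, hmoment]
    _ = _ := Finset.sum_comm

theorem integral_sum_sq_score_le {ι : Type*} [Fintype ι] {k : ℕ} {c C : ℝ} (N : ι → ℕ)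
    (X : (g : ι) → Matrix (Fin (N g)) (Fin k) ℝ)
    (ε : (g : ι) → Ω → Fin (N g) → ℝ) (u : ι → Ω → Fin k → ℝ)
    (hmeasε : ∀ g, Measurable (ε g)) (hmeasu : ∀ g, Measurable (u g))
    (hε : ∀ g p, MemLp (fun ω => ε g ω p) 2 μ) (hu : ∀ g p, MemLp (fun ω => u g ω p) 2 μ)
    (hmeanε : ∀ g p, ∫ ω, ε g ω p ∂μ = 0) (hmeanu : ∀ g p, ∫ ω, u g ω p ∂μ = 0)
    (hindepε : iIndepFun ε μ) (hindepu : iIndepFun u μ)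
    (hindepεu : IndepFun (fun ω g => ε g ω) (fun ω g => u g ω) μ)
    (S : (g : ι) → Matrix (Fin (N g)) (Fin (N g)) ℝ) (hS : ∀ g, crossMoment μ (ε g) (ε g) = S g)
    (D : Matrix (Fin k) (Fin k) ℝ) (hD : ∀ g, crossMoment μ (u g) (u g) = D)
    (hX : ∀ g, lamMax ((X g)ᵀ * X g) ≤ c * N g) (hSeig : ∀ g, lamMax (S g) ≤ C * N g) :
    ∫ ω, ∑ i, ((∑ g, (X g)ᵀ *ᵥ ε g ω) + ∑ g, ((X g)ᵀ * X g) *ᵥ u g ω) i ^ 2 ∂μ ≤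
      k * (c * C + c ^ 2 * lamMax D) * ∑ g, (N g : ℝ) ^ 2 := by
  have hεu : ∀ g h, crossMoment μ (ε g) (u h) = 0 := fun g h =>
    crossMoment_eq_zero_of_indepFun
      (hindepεu.comp (measurable_pi_apply g) (measurable_pi_apply h))
      (hmeasε g) (hmeasu h) (hmeanε g)
  have huε : ∀ g h, crossMoment μ (u g) (ε h) = 0 := fun g h =>
    crossMoment_eq_zero_of_indepFun
      (hindepεu.symm.comp (measurable_pi_apply g) (measurable_pi_apply h))
      (hmeasu g) (hmeasε h) (hmeanu g)
  have horth : Pairwise fun g h => crossMoment μ (fun ω => Sum.elim (ε g ω) (u g ω))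
      (fun ω => Sum.elim (ε h ω) (u h ω)) = 0 := fun g h hgh => by
    dsimp only
    rw [crossMoment_sumElim, hεu, huε,
      crossMoment_eq_zero_of_indepFun (hindepε.indepFun hgh) (hmeasε g) (hmeasε h) (hmeanε g),
      crossMoment_eq_zero_of_indepFun (hindepu.indepFun hgh) (hmeasu g) (hmeasu h) (hmeanu g),
      fromBlocks_zero]
  have hsum : ∀ ω, (∑ g, (X g)ᵀ *ᵥ ε g ω) + ∑ g, ((X g)ᵀ * X g) *ᵥ u g ω =
      ∑ g, fromCols (X g)ᵀ ((X g)ᵀ * X g) *ᵥ Sum.elim (ε g ω) (u g ω) := fun ω => by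
    simp only [fromCols_mulVec_sumElim, Finset.sum_add_distrib]
  simp_rw [hsum]
  rw [integral_sum_sq_sum_mulVec _ (by rintro g (p | p); exacts [hε g p, hu g p]) horth,
    Finset.mul_sum]
  refine Finset.sum_le_sum fun g _ => ?_
  rw [crossMoment_sumElim, hS, hD, hεu, huε, fromCols_mul_fromBlocks_zero_mul_transpose,
    trace_add, transpose_transpose]
  calc _ ≤ k * (c * N g * (C * N g) + (c * N g) ^ 2 * lamMax D) :=
        trace_gram_sandwich_le (X g) (S g) D (hX g) (hSeig g)
          (hS g ▸ lamMax_crossMoment_self_nonneg (hε g))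
          (hD g ▸ lamMax_crossMoment_self_nonneg (hu g))
    _ = _ := by ring

lemma tendsto_measure_ge_of_tendsto_integral {ι : Type*} {l : Filter ι} {Y : ι → Ω → ℝ}
    (hY0 : ∀ i ω, 0 ≤ Y i ω) (hYint : ∀ i, Integrable (Y i) μ)
    (hY : Tendsto (fun i => ∫ ω, Y i ω ∂μ) l (nhds 0)) {δ : ℝ} (hδ : 0 < δ) :
    Tendsto (fun i => μ {ω | δ ≤ Y i ω}) l (nhds 0) := by
  have hmarkov : ∀ i, μ {ω | δ ≤ Y i ω} ≤ ENNReal.ofReal (∫ ω, Y i ω ∂μ) / ENNReal.ofReal δ :=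
    fun i => by
      rw [ofReal_integral_eq_lintegral_ofReal (hYint i) (Eventually.of_forall (hY0 i))]
      simp_rw [← ENNReal.ofReal_le_ofReal_iff (hY0 i _)]
      exact meas_ge_le_lintegral_div (hYint i).aemeasurable.ennreal_ofReal
        (ENNReal.ofReal_pos.2 hδ).ne' ENNReal.ofReal_ne_top
  have hlim : Tendsto (fun i => ENNReal.ofReal (∫ ω, Y i ω ∂μ) / ENNReal.ofReal δ) l (nhds 0) := by
    simpa using ENNReal.Tendsto.div_const (ENNReal.tendsto_ofReal hY)
      (Or.inr (ENNReal.ofReal_pos.2 hδ).ne')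
  exact tendsto_of_tendsto_of_tendsto_of_le_of_le tendsto_const_nhds hlim (fun i => zero_le)
    hmarkov

end Moments

lemma sum_sq_div_sq_sum_le_iSup_div {ι : Type*} [Fintype ι] {x : ι → ℝ} (hx : ∀ g, 0 ≤ x g) :
    (∑ g, x g ^ 2) / (∑ g, x g) ^ 2 ≤ (⨆ g, x g) / ∑ g, x g := by
  have hsq : ∑ g, x g ^ 2 ≤ (⨆ g, x g) * ∑ g, x g := by
    rw [Finset.mul_sum]
    exact Finset.sum_le_sum fun g _ =>
      (sq (x g)).trans_le <|
        mul_le_mul_of_nonneg_right (le_ciSup (Set.finite_range x).bddAbove g) (hx g)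
  rcases eq_or_ne (∑ g, x g) 0 with h0 | h0
  · simp [h0]
  · calc _ ≤ (⨆ g, x g) * (∑ g, x g) / (∑ g, x g) ^ 2 := by gcongr
      _ = _ := by field_simp

theorem stmt14_general {Ωs : Type*} [MeasurableSpace Ωs] (μ : Measure Ωs)
    (k : ℕ) (c C : ℝ)
    (N : (G : ℕ) → Fin G → ℕ)
    (X : (G : ℕ) → (g : Fin G) → Matrix (Fin (N G g)) (Fin k) ℝ)
    (ε : (G : ℕ) → (g : Fin G) → Ωs → (Fin (N G g) → ℝ))
    (u : (G : ℕ) → (g : Fin G) → Ωs → (Fin k → ℝ))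
    (hmeasε : ∀ G g, Measurable (ε G g)) (hmeasu : ∀ G g, Measurable (u G g))
    (hL2ε : ∀ G g i, Integrable (fun ω => (ε G g ω i) ^ 2) μ)
    (hL2u : ∀ G g i, Integrable (fun ω => (u G g ω i) ^ 2) μ)
    (hmeanε : ∀ G g i, ∫ ω, ε G g ω i ∂μ = 0)
    (hmeanu : ∀ G g i, ∫ ω, u G g ω i ∂μ = 0)
    (hindepε : ∀ G, iIndepFun (ε G) μ)
    (hindepu : ∀ G, iIndepFun (u G) μ)
    (hindepεu : ∀ G, IndepFun (fun ω (g : Fin G) => ε G g ω)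
                              (fun ω (g : Fin G) => u G g ω) μ)
    (Ωm : (G : ℕ) → (g : Fin G) → Matrix (Fin (N G g)) (Fin (N G g)) ℝ)
    (hΩ : ∀ G g i j, Ωm G g i j = ∫ ω, ε G g ω i * ε G g ω j ∂μ)
    (Δ : Matrix (Fin k) (Fin k) ℝ)
    (hΔ : ∀ G g i j, ∫ ω, u G g ω i * u G g ω j ∂μ = Δ i j)
    (hXeig : ∀ G g, lamMax ((X G g)ᵀ * X G g) ≤ c * (N G g : ℝ))
    (hΩeig : ∀ G g, lamMax (Ωm G g) ≤ C * (N G g : ℝ))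
    (score : (G : ℕ) → Ωs → (Fin k → ℝ))
    (hscore : ∀ G ω, score G ω =
      ((∑ g, (N G g : ℝ)))⁻¹ •
        ((∑ g, (X G g)ᵀ.mulVec (ε G g ω)) +
         ∑ g, ((X G g)ᵀ * X G g).mulVec (u G g ω))) :
    (∀ G : ℕ, 1 ≤ G →
      ∫ ω, ∑ i, (score G ω i) ^ 2 ∂μ ≤
        (k : ℝ) * (c * C + c ^ 2 * lamMax Δ) *
          (∑ g, (N G g : ℝ) ^ 2) / (∑ g, (N G g : ℝ)) ^ 2) ∧
    (Tendsto (fun G : ℕ => (⨆ g, (N G g : ℝ)) / ∑ g, (N G g : ℝ)) atTop (nhds 0) →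
      Tendsto (fun G : ℕ => ∫ ω, ∑ i, (score G ω i) ^ 2 ∂μ) atTop (nhds 0) ∧
      (∀ η : ℝ, 0 < η →
        Tendsto (fun G : ℕ => μ {ω | η ≤ Real.sqrt (∑ i, (score G ω i) ^ 2)})
          atTop (nhds 0))) := by
  have hε : ∀ G g p, MemLp (fun ω => ε G g ω p) 2 μ := fun G g p =>
    memLp_apply_of_integrable_sq (hmeasε G g) (hL2ε G g p)
  have hu : ∀ G g p, MemLp (fun ω => u G g ω p) 2 μ := fun G g p =>
    memLp_apply_of_integrable_sq (hmeasu G g) (hL2u G g p)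
  have hscore_memLp : ∀ G i, MemLp (fun ω => score G ω i) 2 μ := fun G i => by
    simp_rw [hscore, Pi.smul_apply, Pi.add_apply, Finset.sum_apply, smul_eq_mul]
    exact ((memLp_finsetSum _ fun g _ => memLp_mulVec_apply (hε G g) _ i).add
      (memLp_finsetSum _ fun g _ => memLp_mulVec_apply (hu G g) _ i)).const_mul _
  have hbound : ∀ G, ∫ ω, ∑ i, score G ω i ^ 2 ∂μ ≤
      k * (c * C + c ^ 2 * lamMax Δ) * (∑ g, (N G g : ℝ) ^ 2) / (∑ g, (N G g : ℝ)) ^ 2 :=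
    fun G => calc
      _ = (∑ g, (N G g : ℝ))⁻¹ ^ 2 * ∫ ω, ∑ i, ((∑ g, (X G g)ᵀ *ᵥ ε G g ω) +
            ∑ g, ((X G g)ᵀ * X G g) *ᵥ u G g ω) i ^ 2 ∂μ := by
        simp_rw [hscore, Pi.smul_apply, smul_eq_mul, mul_pow, ← Finset.mul_sum]
        exact integral_const_mul _ _
      _ ≤ (∑ g, (N G g : ℝ))⁻¹ ^ 2 *
            (k * (c * C + c ^ 2 * lamMax Δ) * ∑ g, (N G g : ℝ) ^ 2) := by
        gcongr
        exact integral_sum_sq_score_le (N G) (X G) (ε G) (u G) (hmeasε G) (hmeasu G)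
          (hε G) (hu G) (hmeanε G) (hmeanu G) (hindepε G) (hindepu G) (hindepεu G) (Ωm G)
          (fun g => by ext; exact (hΩ G g _ _).symm) Δ (fun g => by ext; exact hΔ G g _ _)
          (hXeig G) (hΩeig G)
      _ = _ := by ring
  refine ⟨fun G _ => hbound G, fun hmax => ?_⟩
  have hratio :
      Tendsto (fun G => (∑ g, (N G g : ℝ) ^ 2) / (∑ g, (N G g : ℝ)) ^ 2) atTop (nhds 0) :=
    squeeze_zero (fun G => by positivity)
      (fun G => sum_sq_div_sq_sum_le_iSup_div fun g => Nat.cast_nonneg _) hmax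
  have hL2 : Tendsto (fun G => ∫ ω, ∑ i, score G ω i ^ 2 ∂μ) atTop (nhds 0) :=
    squeeze_zero (fun G => integral_nonneg fun ω => by positivity)
      (fun G => (hbound G).trans_eq (mul_div_assoc _ _ _))
      (by simpa using hratio.const_mul (k * (c * C + c ^ 2 * lamMax Δ)))
  refine ⟨hL2, fun η hη => ?_⟩
  simp_rw [Real.le_sqrt' hη]
  exact tendsto_measure_ge_of_tendsto_integral (fun G ω => by positivity)
    (fun G => integrable_finsetSum _ fun i _ => (hscore_memLp G i).integrable_sq) hL2
    (by positivity)

/-- quantitative core of the paper's theorem on the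
consistency of pooled OLS under random coefficients.  If
`λ_max(X_gᵀX_g) ≤ c·N_g` and `λ_max(Ω_g) ≤ C·N_g`, then the normalized pooled
OLS score `(∑_g X_gᵀε_g + ∑_g X_gᵀX_g u_g)/(∑_g N_g)` satisfies
`E‖·‖² ≤ k(cC + c²λ_max(Δ))·(∑N_g²)/(∑N_g)²`; in particular, along any
sequence with `max_g N_g/∑_g N_g → 0` it converges to `0` in `L²` and hence in
probability. -/
theorem stmt14 {Ωs : Type*} [MeasurableSpace Ωs] (μ : Measure Ωs) [IsProbabilityMeasure μ]
    (k : ℕ) (c C : ℝ) (hc : 0 < c) (hC : 0 < C)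
    (N : (G : ℕ) → Fin G → ℕ) (hN : ∀ G g, 1 ≤ N G g)
    (X : (G : ℕ) → (g : Fin G) → Matrix (Fin (N G g)) (Fin k) ℝ)
    (ε : (G : ℕ) → (g : Fin G) → Ωs → (Fin (N G g) → ℝ))
    (u : (G : ℕ) → (g : Fin G) → Ωs → (Fin k → ℝ))
    (hmeasε : ∀ G g, Measurable (ε G g)) (hmeasu : ∀ G g, Measurable (u G g))
    (hL2ε : ∀ G g i, Integrable (fun ω => (ε G g ω i) ^ 2) μ)
    (hL2u : ∀ G g i, Integrable (fun ω => (u G g ω i) ^ 2) μ)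
    (hmeanε : ∀ G g i, ∫ ω, ε G g ω i ∂μ = 0)
    (hmeanu : ∀ G g i, ∫ ω, u G g ω i ∂μ = 0)
    (hindepε : ∀ G, iIndepFun (ε G) μ)
    (hindepu : ∀ G, iIndepFun (u G) μ)
    (hindepεu : ∀ G, IndepFun (fun ω (g : Fin G) => ε G g ω)
                              (fun ω (g : Fin G) => u G g ω) μ)
    (Ωm : (G : ℕ) → (g : Fin G) → Matrix (Fin (N G g)) (Fin (N G g)) ℝ)
    (hΩ : ∀ G g i j, Ωm G g i j = ∫ ω, ε G g ω i * ε G g ω j ∂μ)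
    (Δ : Matrix (Fin k) (Fin k) ℝ)
    (hΔ : ∀ G g i j, ∫ ω, u G g ω i * u G g ω j ∂μ = Δ i j)
    (hXeig : ∀ G g, lamMax ((X G g)ᵀ * X G g) ≤ c * (N G g : ℝ))
    (hΩeig : ∀ G g, lamMax (Ωm G g) ≤ C * (N G g : ℝ))
    (score : (G : ℕ) → Ωs → (Fin k → ℝ))
    (hscore : ∀ G ω, score G ω =
      ((∑ g, (N G g : ℝ)))⁻¹ •
        ((∑ g, (X G g)ᵀ.mulVec (ε G g ω)) +
         ∑ g, ((X G g)ᵀ * X G g).mulVec (u G g ω))) :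
    (∀ G : ℕ, 1 ≤ G →
      ∫ ω, ∑ i, (score G ω i) ^ 2 ∂μ ≤
        (k : ℝ) * (c * C + c ^ 2 * lamMax Δ) *
          (∑ g, (N G g : ℝ) ^ 2) / (∑ g, (N G g : ℝ)) ^ 2) ∧
    (Tendsto (fun G : ℕ => (⨆ g, (N G g : ℝ)) / ∑ g, (N G g : ℝ)) atTop (nhds 0) →
      Tendsto (fun G : ℕ => ∫ ω, ∑ i, (score G ω i) ^ 2 ∂μ) atTop (nhds 0) ∧
      (∀ η : ℝ, 0 < η →
        Tendsto (fun G : ℕ => μ {ω | η ≤ Real.sqrt (∑ i, (score G ω i) ^ 2)})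
          atTop (nhds 0))) :=
  stmt14_general μ k c C N X ε u hmeasε hmeasu hL2ε hL2u hmeanε hmeanu hindepε hindepu hindepεu Ωm
    hΩ Δ hΔ hXeig hΩeig score hscore
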